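/- Let X be a finite set and consider the semigroup of bi-typed partial maps on X with the domain-restricting composition. For disjoint subsets A = (A_ex, A_fr) and B = (B_ex, B_fr) of X, the partial identities id_A and id_B are 𝒟-related if and only if there exists a bijection ψ : (A_ex ∪ A_fr) → (B_ex ∪ B_fr) with ψ(A_ex) = B_ex and ψ(A_fr) = B_fr; in particular, if id_A 𝒟 id_B then |A_ex| = |B_ex| and |A_fr| = |B_fr|. -/

import Mathlib

open scoped Classical

structure BiMap (X : Type*) where
  ex : Set X
  fr : Set X
  disj : ex ∩ fr = ∅
  toFun : X → X
  eq_outside : ∀ x, x ∉ ex ∪ fr → toFun x = x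

noncomputable def BiMap.comp {X : Type*} (g f : BiMap X) : BiMap X where
  ex := {x | x ∈ f.ex ∧ f.toFun x ∈ g.ex}
  fr := {x | x ∈ f.fr ∧ f.toFun x ∈ g.fr}
  disj := by
    ext x
    constructor
    · rintro ⟨⟨h1, _⟩, h2, _⟩
      have hx : x ∈ f.ex ∩ f.fr := ⟨h1, h2⟩
      rw [f.disj] at hx
      exact hx
    · intro hx
      exact absurd hx (Set.notMem_empty x)
  toFun := fun x =>
    if (x ∈ f.ex ∧ f.toFun x ∈ g.ex) ∨ (x ∈ f.fr ∧ f.toFun x ∈ g.fr) then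
      g.toFun (f.toFun x)
    else x
  eq_outside := by
    intro x hx
    exact if_neg (fun hc => hx (by simpa using hc))

def BiMap.pid {X : Type*} (Aex Afr : Set X) (h : Aex ∩ Afr = ∅) : BiMap X :=
  ⟨Aex, Afr, h, id, fun _ _ => rfl⟩

def BiMap.glL {X : Type*} (f g : BiMap X) : Prop :=
  ({h | ∃ s, h = BiMap.comp s f} ∪ {f}) = ({h | ∃ s, h = BiMap.comp s g} ∪ {g})

def BiMap.glR {X : Type*} (f g : BiMap X) : Prop :=
  ({h | ∃ s, h = BiMap.comp f s} ∪ {f}) = ({h | ∃ s, h = BiMap.comp g s} ∪ {g})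

def BiMap.glD {X : Type*} (f g : BiMap X) : Prop :=
  ∃ h, BiMap.glL f h ∧ BiMap.glR h g

/-! 𝓛-related maps have the same exchangeable and frozen domains, and injectivity on the domain
passes along 𝓛 (if `f = s ∘ g` on `dom f = dom g`, then `g` is injective wherever `f` is);
𝓡-related maps have the same exchangeable and frozen images. Hence a witness `h` of
`id_A 𝓛 h 𝓡 id_B` is injective on `A` with `h(A_ex) = B_ex` and `h(A_fr) = B_fr`. Conversely,
if `φ` is such a bijection with inverse `ψ`, extend both by the identity to maps with domains
`A` and `B`; then `id_A = ψ ∘ φ`, `id_B = φ ∘ ψ`, `φ ∘ id_A = φ = id_B ∘ φ`, which gives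
`id_A 𝓛 φ 𝓡 id_B`. -/

open Set Function

theorem setOf_union_singleton_eq_iff {α : Type*} {r : α → α → Prop}
    (hr : ∀ {x y z}, r x y → r y z → r x z) {a b : α} :
    {x | r x a} ∪ {a} = {x | r x b} ∪ {b} ↔ (a = b ∨ r a b) ∧ (b = a ∨ r b a) := by
  constructor
  · intro h
    have ha : a ∈ {x | r x b} ∪ {b} := h ▸ Or.inr rfl
    have hb : b ∈ {x | r x a} ∪ {a} := h.symm ▸ Or.inr rfl
    exact ⟨ha.symm, hb.symm⟩
  · rintro ⟨hab, hba⟩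
    have sub : ∀ {a b : α}, (a = b ∨ r a b) →
        {x | r x a} ∪ {a} ⊆ {x | r x b} ∪ {b} := by
      rintro a b (rfl | hab) x (hx | rfl)
      exacts [Or.inl hx, Or.inr rfl, Or.inl (hr hx hab), Or.inl hab]
    exact (sub hab).antisymm (sub hba)

namespace BiMap

variable {X : Type*}

def dom (f : BiMap X) : Set X := f.ex ∪ f.fr

theorem ext {f g : BiMap X} (hex : f.ex = g.ex) (hfr : f.fr = g.fr)
    (hfun : EqOn f.toFun g.toFun f.dom) : f = g := by
  obtain ⟨fex, ffr, _, φ, hφ⟩ := f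
  obtain ⟨gex, gfr, _, γ, hγ⟩ := g
  dsimp only at hex hfr
  subst hex hfr
  congr
  funext x
  by_cases hx : x ∈ fex ∪ ffr
  · exact hfun hx
  · rw [hφ x hx, hγ x hx]

section comp

variable {g f : BiMap X}

theorem comp_ex_subset : (comp g f).ex ⊆ f.ex := fun _ hx => hx.1

theorem comp_fr_subset : (comp g f).fr ⊆ f.fr := fun _ hx => hx.1

theorem comp_dom_subset : (comp g f).dom ⊆ f.dom :=
  union_subset_union comp_ex_subset comp_fr_subset

theorem comp_toFun_of_mem_dom {x : X} (hx : x ∈ (comp g f).dom) :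
    (comp g f).toFun x = g.toFun (f.toFun x) :=
  if_pos hx

theorem image_comp_ex_subset {s : BiMap X} :
    (comp g s).toFun '' (comp g s).ex ⊆ g.toFun '' g.ex :=
  fun _ ⟨x, hx, hgsx⟩ =>
    ⟨s.toFun x, hx.2, hgsx ▸ (comp_toFun_of_mem_dom (Or.inl hx)).symm⟩

theorem image_comp_fr_subset {s : BiMap X} :
    (comp g s).toFun '' (comp g s).fr ⊆ g.toFun '' g.fr :=
  fun _ ⟨x, hx, hgsx⟩ =>
    ⟨s.toFun x, hx.2, hgsx ▸ (comp_toFun_of_mem_dom (Or.inr hx)).symm⟩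

theorem comp_assoc (a b c : BiMap X) : comp (comp a b) c = comp a (comp b c) := by
  have hbc : ∀ x ∈ (comp b c).dom, (comp b c).toFun x = b.toFun (c.toFun x) :=
    fun _ => comp_toFun_of_mem_dom
  have hex : (comp (comp a b) c).ex = (comp a (comp b c)).ex := by
    ext x
    refine ⟨fun ⟨h1, h2, h3⟩ => ⟨⟨h1, h2⟩, ?_⟩, fun ⟨⟨h1, h2⟩, h3⟩ => ⟨h1, h2, ?_⟩⟩
    · rwa [hbc x (Or.inl ⟨h1, h2⟩)]
    · rwa [hbc x (Or.inl ⟨h1, h2⟩)] at h3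
  have hfr : (comp (comp a b) c).fr = (comp a (comp b c)).fr := by
    ext x
    refine ⟨fun ⟨h1, h2, h3⟩ => ⟨⟨h1, h2⟩, ?_⟩, fun ⟨⟨h1, h2⟩, h3⟩ => ⟨h1, h2, ?_⟩⟩
    · rwa [hbc x (Or.inr ⟨h1, h2⟩)]
    · rwa [hbc x (Or.inr ⟨h1, h2⟩)] at h3
  refine ext hex hfr fun x hx => ?_
  have hx' : x ∈ (comp a (comp b c)).dom := by rwa [dom, ← hex, ← hfr]
  have hcx : c.toFun x ∈ (comp a b).dom := hx.imp And.right And.right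
  rw [comp_toFun_of_mem_dom hx, comp_toFun_of_mem_dom hcx, comp_toFun_of_mem_dom hx',
    hbc x (comp_dom_subset hx')]

theorem comp_pid_self (f : BiMap X) : comp f (pid f.ex f.fr f.disj) = f :=
  ext (Set.ext fun _ => and_self_iff) (Set.ext fun _ => and_self_iff)
    fun _ => comp_toFun_of_mem_dom

theorem pid_comp_of_mapsTo {Bex Bfr : Set X} {hB : Bex ∩ Bfr = ∅}
    (hex : MapsTo f.toFun f.ex Bex) (hfr : MapsTo f.toFun f.fr Bfr) :
    comp (pid Bex Bfr hB) f = f :=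
  ext (Set.ext fun _ => ⟨And.left, fun hx => ⟨hx, hex hx⟩⟩)
    (Set.ext fun _ => ⟨And.left, fun hx => ⟨hx, hfr hx⟩⟩) fun _ => comp_toFun_of_mem_dom

theorem comp_eq_pid_of_leftInvOn (hex : MapsTo f.toFun f.ex g.ex)
    (hfr : MapsTo f.toFun f.fr g.fr) (hinv : LeftInvOn g.toFun f.toFun f.dom) :
    comp g f = pid f.ex f.fr f.disj :=
  ext (Set.ext fun _ => ⟨And.left, fun hx => ⟨hx, hex hx⟩⟩)
    (Set.ext fun _ => ⟨And.left, fun hx => ⟨hx, hfr hx⟩⟩)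
    fun _ hx => (comp_toFun_of_mem_dom hx).trans (hinv (comp_dom_subset hx))

end comp

section Green

variable {f g : BiMap X}

theorem glL_iff :
    glL f g ↔ (f = g ∨ ∃ s, f = comp s g) ∧ (g = f ∨ ∃ s, g = comp s f) :=
  setOf_union_singleton_eq_iff (r := fun x y => ∃ s, x = comp s y) fun ⟨s, hs⟩ ⟨t, ht⟩ =>
    ⟨comp s t, by rw [hs, ht, comp_assoc]⟩

theorem glR_iff :
    glR f g ↔ (f = g ∨ ∃ s, f = comp g s) ∧ (g = f ∨ ∃ s, g = comp f s) :=
  setOf_union_singleton_eq_iff (r := fun x y => ∃ s, x = comp y s) fun ⟨s, hs⟩ ⟨t, ht⟩ =>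
    ⟨comp t s, by rw [hs, ht, comp_assoc]⟩

theorem glD_of_eq_comp {a b h s : BiMap X} (ha : a = comp s h) (hb : b = comp h s)
    (hha : comp h a = h) (hbh : comp b h = h) : glD a b :=
  ⟨h, glL_iff.2 ⟨Or.inr ⟨s, ha⟩, Or.inr ⟨h, hha.symm⟩⟩,
    glR_iff.2 ⟨Or.inr ⟨h, hbh.symm⟩, Or.inr ⟨s, hb⟩⟩⟩

theorem ex_eq_and_fr_eq_of_glL (hL : glL f g) : f.ex = g.ex ∧ f.fr = g.fr := by
  have sub : ∀ {f g : BiMap X}, (f = g ∨ ∃ s, f = comp s g) →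
      f.ex ⊆ g.ex ∧ f.fr ⊆ g.fr := by
    rintro f g (rfl | ⟨s, rfl⟩)
    exacts [⟨subset_rfl, subset_rfl⟩, ⟨comp_ex_subset, comp_fr_subset⟩]
  obtain ⟨hfg, hgf⟩ := glL_iff.1 hL
  exact ⟨(sub hfg).1.antisymm (sub hgf).1, (sub hfg).2.antisymm (sub hgf).2⟩

theorem image_ex_eq_and_image_fr_eq_of_glR (hR : glR f g) :
    f.toFun '' f.ex = g.toFun '' g.ex ∧ f.toFun '' f.fr = g.toFun '' g.fr := by
  have sub : ∀ {f g : BiMap X}, (f = g ∨ ∃ s, f = comp g s) →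
      f.toFun '' f.ex ⊆ g.toFun '' g.ex ∧ f.toFun '' f.fr ⊆ g.toFun '' g.fr := by
    rintro f g (rfl | ⟨s, rfl⟩)
    exacts [⟨subset_rfl, subset_rfl⟩, ⟨image_comp_ex_subset, image_comp_fr_subset⟩]
  obtain ⟨hfg, hgf⟩ := glR_iff.1 hR
  exact ⟨(sub hfg).1.antisymm (sub hgf).1, (sub hfg).2.antisymm (sub hgf).2⟩

theorem injOn_dom_of_glL (hL : glL f g) (hf : InjOn f.toFun f.dom) : InjOn g.toFun g.dom := by
  have hdom : f.dom = g.dom := by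
    rw [dom, dom, (ex_eq_and_fr_eq_of_glL hL).1, (ex_eq_and_fr_eq_of_glL hL).2]
  rcases (glL_iff.1 hL).1 with rfl | ⟨s, rfl⟩
  · exact hf
  · rw [← hdom]
    exact (hf.congr fun _ => comp_toFun_of_mem_dom).of_comp

end Green

noncomputable def ofFun (φ : X → X) (Aex Afr : Set X) (hA : Aex ∩ Afr = ∅) : BiMap X :=
  ⟨Aex, Afr, hA, (Aex ∪ Afr).piecewise φ id, fun _ hx => piecewise_eq_of_notMem _ _ _ hx⟩

theorem ofFun_toFun_eqOn (φ : X → X) (Aex Afr : Set X) (hA : Aex ∩ Afr = ∅) :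
    EqOn (ofFun φ Aex Afr hA).toFun φ (Aex ∪ Afr) :=
  piecewise_eqOn _ _ _

section pid

variable {Aex Afr Bex Bfr : Set X} {hA : Aex ∩ Afr = ∅} {hB : Bex ∩ Bfr = ∅}

theorem exists_bijOn_of_glD_pid (hD : glD (pid Aex Afr hA) (pid Bex Bfr hB)) :
    ∃ ψ : X → X, BijOn ψ (Aex ∪ Afr) (Bex ∪ Bfr) ∧ ψ '' Aex = Bex ∧ ψ '' Afr = Bfr := by
  obtain ⟨h, hL, hR⟩ := hD
  obtain ⟨hex, hfr⟩ : Aex = h.ex ∧ Afr = h.fr := ex_eq_and_fr_eq_of_glL hL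
  obtain ⟨himex, himfr⟩ : h.toFun '' h.ex = Bex ∧ h.toFun '' h.fr = Bfr :=
    (image_ex_eq_and_image_fr_eq_of_glR hR).imp (·.trans (image_id _))
      (·.trans (image_id _))
  have hinj : InjOn h.toFun (Aex ∪ Afr) := hex ▸ hfr ▸ injOn_dom_of_glL hL (injOn_id _)
  subst hex hfr
  refine ⟨h.toFun, ?_, himex, himfr⟩
  rw [← himex, ← himfr, ← image_union]
  exact hinj.bijOn_image

theorem glD_pid_of_invOn {φ ψ : X → X} (hφex : MapsTo φ Aex Bex) (hφfr : MapsTo φ Afr Bfr)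
    (hψex : MapsTo ψ Bex Aex) (hψfr : MapsTo ψ Bfr Afr)
    (hinv : InvOn ψ φ (Aex ∪ Afr) (Bex ∪ Bfr)) :
    glD (pid Aex Afr hA) (pid Bex Bfr hB) := by
  set h := ofFun φ Aex Afr hA
  set s := ofFun ψ Bex Bfr hB
  have hh : EqOn φ h.toFun (Aex ∪ Afr) := (ofFun_toFun_eqOn φ Aex Afr hA).symm
  have hs : EqOn ψ s.toFun (Bex ∪ Bfr) := (ofFun_toFun_eqOn ψ Bex Bfr hB).symm
  have hhex : MapsTo h.toFun Aex Bex := hφex.congr (hh.mono subset_union_left)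
  have hhfr : MapsTo h.toFun Afr Bfr := hφfr.congr (hh.mono subset_union_right)
  have hsex : MapsTo s.toFun Bex Aex := hψex.congr (hs.mono subset_union_left)
  have hsfr : MapsTo s.toFun Bfr Afr := hψfr.congr (hs.mono subset_union_right)
  refine glD_of_eq_comp (h := h) (s := s) ?_ ?_ (comp_pid_self h)
    (pid_comp_of_mapsTo hhex hhfr)
  · exact (comp_eq_pid_of_leftInvOn hhex hhfr
      ((hinv.1.congr_left (hφex.union_union hφfr) hs).congr_right hh)).symm
  · exact (comp_eq_pid_of_leftInvOn hsex hsfr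
      ((LeftInvOn.congr_left hinv.2 (hψex.union_union hψfr) hh).congr_right hs)).symm

theorem glD_pid_of_bijOn {ψ : X → X} (hψ : BijOn ψ (Aex ∪ Afr) (Bex ∪ Bfr))
    (hex : ψ '' Aex = Bex) (hfr : ψ '' Afr = Bfr) :
    glD (pid Aex Afr hA) (pid Bex Bfr hB) := by
  -- `invFunOn` needs a point of `X`; on the empty type all bi-typed maps coincide.
  rcases isEmpty_or_nonempty X with hX | hX
  · have hAB : pid Aex Afr hA = pid Bex Bfr hB :=
      ext (Set.ext isEmptyElim) (Set.ext isEmptyElim) fun x => isEmptyElim x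
    exact hAB ▸ ⟨_, rfl, rfl⟩
  have hinvex : invFunOn ψ (Aex ∪ Afr) '' Bex = Aex := by
    rw [← hex, hψ.injOn.invFunOn_image subset_union_left]
  have hinvfr : invFunOn ψ (Aex ∪ Afr) '' Bfr = Afr := by
    rw [← hfr, hψ.injOn.invFunOn_image subset_union_right]
  exact glD_pid_of_invOn (mapsTo_iff_image_subset.2 hex.subset)
    (mapsTo_iff_image_subset.2 hfr.subset) (mapsTo_iff_image_subset.2 hinvex.subset)
    (mapsTo_iff_image_subset.2 hinvfr.subset) hψ.invOn_invFunOn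

theorem glD_pid_iff_exists_bijOn : glD (pid Aex Afr hA) (pid Bex Bfr hB) ↔
    ∃ ψ : X → X, BijOn ψ (Aex ∪ Afr) (Bex ∪ Bfr) ∧ ψ '' Aex = Bex ∧ ψ '' Afr = Bfr :=
  ⟨exists_bijOn_of_glD_pid, fun ⟨_, hψ, hex, hfr⟩ => glD_pid_of_bijOn hψ hex hfr⟩

end pid

end BiMap

theorem BiMap.pid_D_iff_bijection_general {X : Type*}
    (Aex Afr Bex Bfr : Set X) (hA : Aex ∩ Afr = ∅) (hB : Bex ∩ Bfr = ∅) :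
    (BiMap.glD (BiMap.pid Aex Afr hA) (BiMap.pid Bex Bfr hB) ↔
      ∃ ψ : X → X, Set.BijOn ψ (Aex ∪ Afr) (Bex ∪ Bfr) ∧
        ψ '' Aex = Bex ∧ ψ '' Afr = Bfr) ∧
    (BiMap.glD (BiMap.pid Aex Afr hA) (BiMap.pid Bex Bfr hB) →
      Aex.ncard = Bex.ncard ∧ Afr.ncard = Bfr.ncard) := by
  refine ⟨BiMap.glD_pid_iff_exists_bijOn, fun hD => ?_⟩
  obtain ⟨ψ, hψ, hex, hfr⟩ := BiMap.glD_pid_iff_exists_bijOn.1 hD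
  rw [← hex, ← hfr]
  exact ⟨(hψ.injOn.mono subset_union_left).ncard_image.symm,
    (hψ.injOn.mono subset_union_right).ncard_image.symm⟩

/-- Two partial identities are 𝒟-related iff there is a type-preserving bijection between
their domains; in particular 𝒟-related partial identities have domains of equal sizes. -/
theorem BiMap.pid_D_iff_bijection {X : Type*} [Finite X]
    (Aex Afr Bex Bfr : Set X) (hA : Aex ∩ Afr = ∅) (hB : Bex ∩ Bfr = ∅) :
    (BiMap.glD (BiMap.pid Aex Afr hA) (BiMap.pid Bex Bfr hB) ↔
      ∃ ψ : X → X, Set.BijOn ψ (Aex ∪ Afr) (Bex ∪ Bfr) ∧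
        ψ '' Aex = Bex ∧ ψ '' Afr = Bfr) ∧
    (BiMap.glD (BiMap.pid Aex Afr hA) (BiMap.pid Bex Bfr hB) →
      Aex.ncard = Bex.ncard ∧ Afr.ncard = Bfr.ncard) :=
  BiMap.pid_D_iff_bijection_general Aex Afr Bex Bfr hA hB
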